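/- arXiv:1411.2101 — 2 statements merged into one kernel-verified Lean document; each statement's English description precedes it below -/
import Mathlib

section
/- Let l ≥ 0 be a real number, k ≥ 1 an integer, a_1, …, a_k real numbers satisfying a_i ≤ a_1 + (i−1)·l for all i, and r_1, …, r_k positive integers with r = r_1 + ⋯ + r_k. If (∑_{i=1}^{k} a_i·r_i)/r > (r−1)·l/2, then a_1 > 0. -/
/-! Since `a_i ≤ a_1 + (i - 1) l`, the weighted mean `(∑ a_i r_i) / r` is at most
`a_1 + l ∑ (i - 1) r_i / r`, and positivity of the `r_i` forces `∑ (i - 1) r_i ≤ r (r - 1) / 2`.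
So the mean is at most `a_1 + (r - 1) l / 2`, and the hypothesis leaves `a_1 > 0`. -/

open Finset

/-- Subtraction-free form of `∑ i * r i ≤ R (R - 1) / 2` for `R = ∑ r i`. -/
theorem Fin.two_mul_sum_val_mul_add_sum_le_sq {k : ℕ} (r : Fin k → ℕ) (hr : ∀ i, 1 ≤ r i) :
    2 * ∑ i : Fin k, (i : ℕ) * r i + ∑ i, r i ≤ (∑ i, r i) ^ 2 := by
  induction k with
  | zero => simp
  | succ n ih =>
    have ih' := ih (fun i => r i.succ) (fun i => hr i.succ)
    have hshift : ∑ i : Fin n, ((i : ℕ) + 1) * r i.succ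
        = ∑ i : Fin n, (i : ℕ) * r i.succ + ∑ i : Fin n, r i.succ := by
      rw [← sum_add_distrib]
      exact sum_congr rfl fun i _ => by ring
    simp only [Fin.sum_univ_succ (f := fun i : Fin (n + 1) => (i : ℕ) * r i),
      Fin.sum_univ_succ (f := r), Fin.val_zero, Fin.val_succ, zero_mul, zero_add, hshift]
    nlinarith [hr 0, Nat.mul_le_mul_right (∑ i : Fin n, r i.succ) (hr 0)]

theorem Fin.sum_mul_le_of_le_add_val_mul {k : ℕ} (a w : Fin k → ℝ) (hw : ∀ i, 0 ≤ w i)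
    (c l : ℝ) (ha : ∀ i : Fin k, a i ≤ c + (i : ℕ) * l) :
    ∑ i, a i * w i ≤ c * ∑ i, w i + l * ∑ i : Fin k, ((i : ℕ) : ℝ) * w i :=
  calc ∑ i, a i * w i ≤ ∑ i : Fin k, (c + (i : ℕ) * l) * w i :=
        sum_le_sum fun i _ => mul_le_mul_of_nonneg_right (ha i) (hw i)
    _ = c * ∑ i, w i + l * ∑ i : Fin k, ((i : ℕ) : ℝ) * w i := by
        rw [mul_sum, mul_sum, ← sum_add_distrib]
        exact sum_congr rfl fun i _ => by ring

/-- `i : Fin k` encodes the index `i + 1`, so `a 0` is `a_1` and `i - 1` is `i.val`. -/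
theorem stmt_1 (l : ℝ) (hl : 0 ≤ l) (k : ℕ) (hk : 1 ≤ k)
    (a : Fin k → ℝ) (r : Fin k → ℕ) (hpos : ∀ i, 0 < r i)
    (R : ℕ) (hsum : ∑ i, r i = R)
    (ha : ∀ i : Fin k, a i ≤ a ⟨0, hk⟩ + (i : ℕ) * l)
    (hmu : (∑ i, a i * (r i : ℝ)) / (R : ℝ) > ((R : ℝ) - 1) * l / 2) :
    a ⟨0, hk⟩ > 0 := by
  have hR : (0 : ℝ) < R := by
    rw [← hsum, Nat.cast_pos]
    exact sum_pos (fun i _ => hpos i) ⟨⟨0, hk⟩, mem_univ _⟩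
  have hindex : 2 * ∑ i : Fin k, ((i : ℕ) : ℝ) * (r i : ℝ) + R ≤ (R : ℝ) ^ 2 := by
    rw [← hsum]
    exact_mod_cast Fin.two_mul_sum_val_mul_add_sum_le_sq r hpos
  have hweighted := Fin.sum_mul_le_of_le_add_val_mul a (fun i => (r i : ℝ))
    (fun i => Nat.cast_nonneg _) _ l ha
  rw [← Nat.cast_sum, hsum] at hweighted
  rw [gt_iff_lt, lt_div_iff₀ hR] at hmu
  have hprod : 0 < a ⟨0, hk⟩ * R := by nlinarith
  exact pos_of_mul_pos_left hprod hR.le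
end

section
/- Fix integers g, l, and s ≥ 1, and vectors α_i = (r_i, d_i) ∈ ℤ² for i = 1, …, s. Define the bilinear form χ((r,d),(r',d')) = r·d' − d·r' + (1−g)·r·r' on ℤ², and for α = (r,d) and n ∈ ℤ set α(n) = (r, d + n·r). Then ∑_{k=0}^{s−1} ∑_{i=k+1}^{s} ∑_{j=k+2}^{s} χ(α_i(−k·l), α_j((1−j)·l)) = ∑_{1≤i<j≤s} ( i·χ(α_i,α_j) + (i−1)·χ(α_j,α_i) − i(j−1)·r_i·r_j·l ) + ∑_{i=1}^{s} ( (i−1)·χ(α_i,α_i) − (i(i−1)/2)·r_i²·l ). -/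
/- Each summand χ(α_i(−kl), α_j((1−j)l)) equals χ(α_i, α_j) + ((1−j)l + kl)·r_i r_j. Exchanging the
order of summation, the pair (i, j) collects the terms k < min(i, j − 1), so the left side is a sum
over the square [1, s]² of arithmetic progressions in k. Folding the square onto the triangle
i < j, the contributions of (i, j) and (j, i) combine (via ∑_{k<i} k + ∑_{k<i−1} k = (i−1)²) to the
stated off-diagonal term, and Gauss' formula gives the diagonal term. -/

open Finset

/-- The Euler form `χ((r,d),(r',d')) = r·d' − d·r' + (1−g)·r·r'` on `ℤ²`. -/
def eulerForm (g : ℤ) (a b : ℤ × ℤ) : ℤ :=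
  a.1 * b.2 - a.2 * b.1 + (1 - g) * a.1 * b.1

/-- The twist `α(n) = (r, d + n·r)` of `α = (r,d)` by `n`. -/
def twist (a : ℤ × ℤ) (n : ℤ) : ℤ × ℤ :=
  (a.1, a.2 + n * a.1)

theorem sum_range_sum_Icc_sum_Icc_comm {M : Type*} [AddCommMonoid M] (s : ℕ)
    (f : ℕ → ℕ → ℕ → M) :
    ∑ k ∈ range s, ∑ i ∈ Icc (k + 1) s, ∑ j ∈ Icc (k + 2) s, f k i j
      = ∑ i ∈ Icc 1 s, ∑ j ∈ Icc 1 s, ∑ k ∈ range (min i (j - 1)), f k i j := by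
  rw [sum_comm' (t' := Icc 1 s) (s' := range) (fun k i => by simp only [mem_range, mem_Icc]; omega)]
  refine sum_congr rfl fun i _ => sum_comm' fun k j => ?_
  simp only [mem_range, mem_Icc]
  omega

theorem sum_Icc_sum_Icc_eq_sum_triangle {M : Type*} [AddCommMonoid M] (s : ℕ)
    (f : ℕ → ℕ → M) :
    ∑ i ∈ Icc 1 s, ∑ j ∈ Icc 1 s, f i j
      = ∑ j ∈ Icc 1 s, ∑ i ∈ Icc 1 (j - 1), (f i j + f j i) + ∑ i ∈ Icc 1 s, f i i := by
  induction s with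
  | zero => simp
  | succ s ih =>
    simp only [sum_Icc_succ_top (Nat.le_add_left 1 s), sum_add_distrib, Nat.add_sub_cancel] at ih ⊢
    rw [ih]
    abel

theorem two_mul_sum_range_natCast (n : ℕ) : 2 * ∑ k ∈ range n, (k : ℤ) = n * (n - 1) := by
  induction n with
  | zero => simp
  | succ n ih =>
    rw [sum_range_succ, mul_add, ih]
    push_cast
    ring

theorem sum_range_natCast (n : ℕ) : ∑ k ∈ range n, (k : ℤ) = n * (n - 1) / 2 := by
  rw [← two_mul_sum_range_natCast, Int.mul_ediv_cancel_left _ two_ne_zero]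

theorem eulerForm_twist_twist (g : ℤ) (a b : ℤ × ℤ) (m n : ℤ) :
    eulerForm g (twist a m) (twist b n) = eulerForm g a b + (n - m) * a.1 * b.1 := by
  simp only [eulerForm, twist]
  ring

theorem sum_range_eulerForm_twist (g l n : ℤ) (a b : ℤ × ℤ) (m : ℕ) :
    ∑ k ∈ range m, eulerForm g (twist a (-(k : ℤ) * l)) (twist b n)
      = m * eulerForm g a b + (m * n + (∑ k ∈ range m, (k : ℤ)) * l) * a.1 * b.1 := by
  induction m with
  | zero => simp
  | succ m ih =>
    rw [sum_range_succ, sum_range_succ, ih, eulerForm_twist_twist]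
    push_cast
    ring

def pairContribution (g l : ℤ) (α : ℕ → ℤ × ℤ) (i j : ℕ) : ℤ :=
  ∑ k ∈ range (min i (j - 1)), eulerForm g (twist (α i) (-(k : ℤ) * l)) (twist (α j) ((1 - j) * l))

theorem pairContribution_add_pairContribution_of_lt (g l : ℤ) (α : ℕ → ℤ × ℤ) {i j : ℕ}
    (hi : 1 ≤ i) (hij : i < j) :
    pairContribution g l α i j + pairContribution g l α j i
      = i * eulerForm g (α i) (α j) + (i - 1) * eulerForm g (α j) (α i)
          - i * (j - 1) * (α i).1 * (α j).1 * l := by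
  obtain ⟨p, rfl⟩ : ∃ p, i = p + 1 := ⟨i - 1, by omega⟩
  have hmin₁ : min (p + 1) (j - 1) = p + 1 := by omega
  have hmin₂ : min j (p + 1 - 1) = p := by omega
  have hstep : ∑ k ∈ range (p + 1), (k : ℤ) = ∑ k ∈ range p, (k : ℤ) + p := sum_range_succ _ _
  simp only [pairContribution, hmin₁, hmin₂, sum_range_eulerForm_twist, hstep]
  push_cast
  linear_combination l * (α (p + 1)).1 * (α j).1 * two_mul_sum_range_natCast p

theorem pairContribution_self (g l : ℤ) (α : ℕ → ℤ × ℤ) {i : ℕ} (hi : 1 ≤ i) :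
    pairContribution g l α i i
      = (i - 1) * eulerForm g (α i) (α i) - i * (i - 1) / 2 * (α i).1 ^ 2 * l := by
  obtain ⟨p, rfl⟩ : ∃ p, i = p + 1 := ⟨i - 1, by omega⟩
  have hmin : min (p + 1) (p + 1 - 1) = p := by omega
  have hgauss : ((p + 1 : ℕ) : ℤ) * ((p + 1 : ℕ) - 1) / 2 = ∑ k ∈ range p, (k : ℤ) + p := by
    rw [← sum_range_natCast, sum_range_succ]
  rw [hgauss, pairContribution, hmin, sum_range_eulerForm_twist]
  push_cast
  linear_combination (l * (α (p + 1)).1 ^ 2) * two_mul_sum_range_natCast p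

theorem stmt_4_general (g l : ℤ) (s : ℕ) (α : ℕ → ℤ × ℤ) :
    ∑ k ∈ range s, ∑ i ∈ Icc (k + 1) s, ∑ j ∈ Icc (k + 2) s,
        eulerForm g (twist (α i) (-(k : ℤ) * l)) (twist (α j) ((1 - (j : ℤ)) * l))
    = (∑ j ∈ Icc 1 s, ∑ i ∈ Icc 1 (j - 1),
          ((i : ℤ) * eulerForm g (α i) (α j) + ((i : ℤ) - 1) * eulerForm g (α j) (α i)
            - (i : ℤ) * ((j : ℤ) - 1) * (α i).1 * (α j).1 * l))
      + ∑ i ∈ Icc 1 s,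
          (((i : ℤ) - 1) * eulerForm g (α i) (α i)
            - (i : ℤ) * ((i : ℤ) - 1) / 2 * (α i).1 ^ 2 * l) := by
  rw [sum_range_sum_Icc_sum_Icc_comm]
  change ∑ i ∈ Icc 1 s, ∑ j ∈ Icc 1 s, pairContribution g l α i j = _
  rw [sum_Icc_sum_Icc_eq_sum_triangle]
  congr 1
  · refine sum_congr rfl fun j _ => sum_congr rfl fun i hi => ?_
    rw [mem_Icc] at hi
    exact pairContribution_add_pairContribution_of_lt g l α hi.1 (by omega)
  · exact sum_congr rfl fun i hi => pairContribution_self g l α (mem_Icc.mp hi).1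

/-- Fix integers `g`, `l`, `s ≥ 1` and vectors `α_i = (r_i, d_i) ∈ ℤ²` for `i = 1, …, s`. Then
`∑_{k=0}^{s−1} ∑_{i=k+1}^{s} ∑_{j=k+2}^{s} χ(α_i(−k·l), α_j((1−j)·l))
 = ∑_{1≤i<j≤s} (i·χ(α_i,α_j) + (i−1)·χ(α_j,α_i) − i(j−1)·r_i·r_j·l)
   + ∑_{i=1}^{s} ((i−1)·χ(α_i,α_i) − (i(i−1)/2)·r_i²·l)`. -/
theorem stmt_4 (g l : ℤ) (s : ℕ) (hs : 1 ≤ s) (α : ℕ → ℤ × ℤ) :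
    ∑ k ∈ range s, ∑ i ∈ Icc (k + 1) s, ∑ j ∈ Icc (k + 2) s,
        eulerForm g (twist (α i) (-(k : ℤ) * l)) (twist (α j) ((1 - (j : ℤ)) * l))
    = (∑ j ∈ Icc 1 s, ∑ i ∈ Icc 1 (j - 1),
          ((i : ℤ) * eulerForm g (α i) (α j) + ((i : ℤ) - 1) * eulerForm g (α j) (α i)
            - (i : ℤ) * ((j : ℤ) - 1) * (α i).1 * (α j).1 * l))
      + ∑ i ∈ Icc 1 s,
          (((i : ℤ) - 1) * eulerForm g (α i) (α i)
            - (i : ℤ) * ((i : ℤ) - 1) / 2 * (α i).1 ^ 2 * l) :=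
  stmt_4_general g l s α
end
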